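/- Iterated Euler steps commute with products across the head/tail decomposition: for all m ∈ ℕ, probability measures μ, μ' on X, and i ≠ i•, (T_h^sel)^m(μ_{C_i} ⊗ μ'_{D_i}) = ((T_h^sel)^m μ)_{C_i} ⊗ μ'_{D_i}. -/
import Mathlib


open Finset Real Filter MeasureTheory

noncomputable section

abbrev X (n : ℕ) := Fin n → Bool

def isProb {n : ℕ} (ν : X n → ℝ) : Prop :=
  (∀ x, 0 ≤ ν x) ∧ ∑ x, ν x = 1

def Fsel {n : ℕ} (i0 : Fin n) (ν : X n → ℝ) : X n → ℝ :=
  fun x => if x i0 = false then ν x else 0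

def fsel {n : ℕ} (i0 : Fin n) (ν : X n → ℝ) : ℝ := ∑ x, Fsel i0 ν x

def phi {n : ℕ} (s : ℝ) (i0 : Fin n) (t : ℝ) (ν : X n → ℝ) : X n → ℝ :=
  fun x => (Real.exp (s * t) * Fsel i0 ν x + (ν x - Fsel i0 ν x)) /
    (Real.exp (s * t) * fsel i0 ν + 1 - fsel i0 ν)

/-- marginal of `ν` with respect to the coordinates in `A`, evaluated at (the
restriction to `A` of) `y`. -/
def marg {n : ℕ} (A : Finset (Fin n)) (ν : X n → ℝ) (y : X n) : ℝ :=
  ∑ x, if ∀ i ∈ A, x i = y i then ν x else 0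

/-- the `i`-tail `D_i = {j : i• ≤ i ≤ j or i• ≥ i ≥ j}`. -/
def Dtail {n : ℕ} (i0 i : Fin n) : Finset (Fin n) :=
  univ.filter (fun j => (i0 ≤ i ∧ i ≤ j) ∨ (i ≤ i0 ∧ j ≤ i))

/-- the `i`-head `C_i`, the complement of the tail. -/
def Chead {n : ℕ} (i0 i : Fin n) : Finset (Fin n) := univ \ Dtail i0 i

/-- Euler step of the pure selection equation. -/
def Tsel {n : ℕ} (s h : ℝ) (i0 : Fin n) (ν : X n → ℝ) : X n → ℝ :=
  fun x => ν x + h * s * (Fsel i0 ν x - fsel i0 ν * ν x)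

lemma marg_comb {n : ℕ} (A : Finset (Fin n)) (f g : X n → ℝ) (a b : ℝ) (y : X n) :
    marg A (fun x => a * f x + b * g x) y = a * marg A f y + b * marg A g y := by
  unfold marg
  rw [Finset.mul_sum, Finset.mul_sum, ← Finset.sum_add_distrib]
  refine Finset.sum_congr rfl fun x _ => ?_
  split <;> ring

lemma marg_Fsel {n : ℕ} {A : Finset (Fin n)} {i0 : Fin n} (hA : i0 ∈ A)
    (μ : X n → ℝ) (y : X n) :
    marg A (Fsel i0 μ) y = if y i0 = false then marg A μ y else 0 := by
  unfold marg Fsel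
  by_cases hy : y i0 = false
  · rw [if_pos hy]
    refine Finset.sum_congr rfl fun x _ => ?_
    by_cases hc : ∀ i ∈ A, x i = y i
    · have : x i0 = false := (hc i0 hA).trans hy
      simp [hc, this]
    · simp [hc]
  · rw [if_neg hy]
    refine Finset.sum_eq_zero fun x _ => ?_
    by_cases hc : ∀ i ∈ A, x i = y i
    · have : ¬ (x i0 = false) := by rw [hc i0 hA]; exact hy
      simp [hc, this]
    · simp [hc]

lemma fsel_prod {n : ℕ} (D : Finset (Fin n)) (i0 : Fin n) (h0 : i0 ∉ D)
    (μ μ' : X n → ℝ) :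
    fsel i0 (fun y => marg (univ \ D) μ y * marg D μ' y)
      = fsel i0 μ * ∑ x, μ' x := by
  classical
  have key : ∀ x x' : X n,
      (∑ y : X n, if y i0 = false then
        (if ∀ j ∈ univ \ D, x j = y j then μ x else 0) *
        (if ∀ j ∈ D, x' j = y j then μ' x' else 0) else 0)
      = if x i0 = false then μ x * μ' x' else 0 := by
    intro x x'
    set g : X n := fun j => if j ∈ D then x' j else x j with hg
    rw [Finset.sum_eq_single_of_mem g (Finset.mem_univ g)]
    · have h1 : ∀ j ∈ univ \ D, x j = g j := by
        intro j hj
        simp only [Finset.mem_sdiff, Finset.mem_univ, true_and] at hj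
        simp [hg, hj]
      have h2 : ∀ j ∈ D, x' j = g j := by
        intro j hj; simp [hg, hj]
      have h3 : g i0 = x i0 := by simp [hg, h0]
      have h1' : ∀ j, j ∉ D → x j = g j := by
        intro j hj; simp [hg, hj]
      simp only [h3, Finset.mem_sdiff, Finset.mem_univ, true_and]
      split <;> rfl
    · intro y _ hy
      have : ∃ j, y j ≠ g j := by
        by_contra hcon
        push_neg at hcon
        exact hy (funext hcon)
      obtain ⟨j, hj⟩ := this
      by_cases hjD : j ∈ D
      · have : ¬ (∀ j ∈ D, x' j = y j) := by
          intro hc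
          exact hj (by rw [← hc j hjD]; simp [hg, hjD])
        simp only [this, if_false, mul_zero]
        split <;> rfl
      · have : ¬ (∀ j ∈ univ \ D, x j = y j) := by
          intro hc
          refine hj ?_
          rw [← hc j (by simp [hjD])]
          simp [hg, hjD]
        simp only [this, if_false, zero_mul]
        split <;> rfl
  unfold fsel Fsel marg
  calc (∑ y : X n, if y i0 = false then
          (∑ x : X n, if ∀ j ∈ univ \ D, x j = y j then μ x else 0) *
          (∑ x' : X n, if ∀ j ∈ D, x' j = y j then μ' x' else 0) else 0)
      = ∑ y : X n, ∑ x : X n, ∑ x' : X n, (if y i0 = false then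
          (if ∀ j ∈ univ \ D, x j = y j then μ x else 0) *
          (if ∀ j ∈ D, x' j = y j then μ' x' else 0) else 0) := by
        refine Finset.sum_congr rfl fun y _ => ?_
        rw [Finset.sum_mul_sum]
        split
        · rfl
        · simp
    _ = ∑ x : X n, ∑ x' : X n, ∑ y : X n, (if y i0 = false then
          (if ∀ j ∈ univ \ D, x j = y j then μ x else 0) *
          (if ∀ j ∈ D, x' j = y j then μ' x' else 0) else 0) := by
        rw [Finset.sum_comm]
        exact Finset.sum_congr rfl fun x _ => Finset.sum_comm
    _ = ∑ x : X n, ∑ x' : X n, (if x i0 = false then μ x * μ' x' else 0) := by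
        exact Finset.sum_congr rfl fun x _ => Finset.sum_congr rfl fun x' _ => key x x'
    _ = (∑ x : X n, if x i0 = false then μ x else 0) * ∑ x, μ' x := by
        rw [Finset.sum_mul]
        refine Finset.sum_congr rfl fun x _ => ?_
        rw [Finset.mul_sum]
        split
        · rfl
        · simp

lemma Tsel_prod {n : ℕ} (D : Finset (Fin n)) (i0 : Fin n) (h0 : i0 ∉ D)
    (s h : ℝ) (μ μ' : X n → ℝ) (hsum : ∑ x, μ' x = 1) :
    Tsel s h i0 (fun y => marg (univ \ D) μ y * marg D μ' y)
      = fun y => marg (univ \ D) (Tsel s h i0 μ) y * marg D μ' y := by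
  have hmem : i0 ∈ univ \ D := by simp [h0]
  funext y
  have hf : fsel i0 (fun y => marg (univ \ D) μ y * marg D μ' y) = fsel i0 μ := by
    rw [fsel_prod D i0 h0 μ μ', hsum, mul_one]
  have hT : Tsel s h i0 μ = fun x =>
      (1 - h * s * fsel i0 μ) * μ x + (h * s) * Fsel i0 μ x := by
    funext x; simp only [Tsel]; ring
  have hm : marg (univ \ D) (Tsel s h i0 μ) y
      = (1 - h * s * fsel i0 μ) * marg (univ \ D) μ y
        + (h * s) * (if y i0 = false then marg (univ \ D) μ y else 0) := by
    rw [hT, marg_comb, marg_Fsel hmem]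
  simp only [Tsel, Fsel, hf, hm]
  split <;> ring

lemma Tsel_prod_iter {n : ℕ} (D : Finset (Fin n)) (i0 : Fin n) (h0 : i0 ∉ D)
    (s h : ℝ) (μ μ' : X n → ℝ) (hsum : ∑ x, μ' x = 1) (m : ℕ) :
    (Tsel s h i0)^[m] (fun y => marg (univ \ D) μ y * marg D μ' y)
      = fun y => marg (univ \ D) ((Tsel s h i0)^[m] μ) y * marg D μ' y := by
  induction m generalizing μ with
  | zero => simp
  | succ m ih =>
    rw [Function.iterate_succ_apply, Function.iterate_succ_apply,
      Tsel_prod D i0 h0 s h μ μ' hsum, ih (Tsel s h i0 μ)]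

lemma i0_not_mem_Dtail {n : ℕ} {i0 i : Fin n} (hi : i ≠ i0) : i0 ∉ Dtail i0 i := by
  simp only [Dtail, Finset.mem_filter, Finset.mem_univ, true_and]
  rintro (⟨h1, h2⟩ | ⟨h1, h2⟩)
  · exact hi (le_antisymm h2 h1)
  · exact hi (le_antisymm h1 h2)

/-- Iterated Euler steps commute with products across the head/tail
decomposition. -/
theorem stmt_6 {n : ℕ} (i0 i : Fin n) (hi : i ≠ i0) (s h : ℝ) (hs : 0 < s) (hh : 0 < h)
    (μ μ' : X n → ℝ) (hμ : isProb μ) (hμ' : isProb μ') (m : ℕ) :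
    (Tsel s h i0)^[m] (fun y => marg (Chead i0 i) μ y * marg (Dtail i0 i) μ' y)
      = fun y => marg (Chead i0 i) ((Tsel s h i0)^[m] μ) y * marg (Dtail i0 i) μ' y := by
  have h0 : i0 ∉ Dtail i0 i := i0_not_mem_Dtail hi
  have hC : Chead i0 i = univ \ Dtail i0 i := rfl
  rw [hC]
  exact Tsel_prod_iter (Dtail i0 i) i0 h0 s h μ μ' hμ'.2 m
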